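/- arXiv:1712.04122 — 2 statements merged into one kernel-verified Lean document; each statement's English description precedes it below -/
import Mathlib

section
/- Let V be a nonempty finite index set and for each ω ∈ V let W_ω be an n×n real symmetric positive semidefinite matrix; set W_S := ∑_{ω ∈ S} W_ω and f(S) := λ_n(W_S). Assume max_{ω ∈ V} λ_1(W_ω) > 0 and let γ₀ := (min_{ω ∈ V} λ_n(W_ω)) / (max_{ω ∈ V} λ_1(W_ω)). Then for all Ω, S ⊆ V and every j ∈ S \ Ω: f(S ∪ Ω) − f((S \ {j}) ∪ Ω) ≥ γ₀ · [f(S) − f(S \ {j})]. In particular, the curvature of f is at most 1 − γ₀. -/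
open Classical in
/-- Smallest eigenvalue of a real symmetric matrix (junk value `0` if not symmetric). -/
noncomputable def lambdaMin {n : ℕ} (M : Matrix (Fin n) (Fin n) ℝ) : ℝ :=
  if h : M.IsHermitian then ⨅ i, h.eigenvalues i else 0

open Classical in
/-- Largest eigenvalue of a real symmetric matrix (junk value `0` if not symmetric). -/
noncomputable def lambdaMax {n : ℕ} (M : Matrix (Fin n) (Fin n) ℝ) : ℝ :=
  if h : M.IsHermitian then ⨆ i, h.eigenvalues i else 0

/-!
Weyl's inequalities `λ_min(A) + λ_min(B) ≤ λ_min(A + B) ≤ λ_min(A) + λ_max(B)`, both read off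
Rayleigh quotients, put the marginal gain of `f(S) = λ_min(W_S)` from adding `j` to any set
between `λ_min(W_j) ≥ min_ω λ_min(W_ω) ≥ 0` and `λ_max(W_j) ≤ max_ω λ_max(W_ω)`. So the gain on
top of `(S \ {j}) ∪ Ω` is at least the numerator of `γ₀`, and `γ₀` times the gain on top of
`S \ {j}` is at most that numerator; a zero denominator is harmless, as then `γ₀ = 0`.
-/

open Matrix

namespace Matrix.IsHermitian

variable {ι : Type*} [Fintype ι] [DecidableEq ι] {A : Matrix ι ι ℝ}

theorem dotProduct_mulVec_eq_sum_eigenvalues_mul_sq (hA : A.IsHermitian) (x : ι → ℝ) :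
    x ⬝ᵥ (A *ᵥ x) =
      ∑ i, hA.eigenvalues i * ((star (hA.eigenvectorUnitary : Matrix ι ι ℝ) *ᵥ x) i) ^ 2 := by
  set U := (hA.eigenvectorUnitary : Matrix ι ι ℝ) with hU
  have hstar : star U = Uᵀ := by
    rw [star_eq_conjTranspose, conjTranspose_eq_transpose_of_trivial]
  conv_lhs => rw [hA.spectral_theorem, Unitary.conjStarAlgAut_apply]
  rw [← hU, ← mulVec_mulVec, ← mulVec_mulVec, dotProduct_mulVec x U, ← mulVec_transpose,
    ← hstar]
  simp [mulVec_diagonal, dotProduct, sq, mul_left_comm]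

theorem dotProduct_self_eq_sum_sq (hA : A.IsHermitian) (x : ι → ℝ) :
    x ⬝ᵥ x = ∑ i, ((star (hA.eigenvectorUnitary : Matrix ι ι ℝ) *ᵥ x) i) ^ 2 := by
  set U := (hA.eigenvectorUnitary : Matrix ι ι ℝ) with hU
  have hstar : star U = Uᵀ := by
    rw [star_eq_conjTranspose, conjTranspose_eq_transpose_of_trivial]
  have hUU : U * star U = 1 := mem_unitaryGroup_iff.mp hA.eigenvectorUnitary.2
  have hiso : (star U *ᵥ x) ⬝ᵥ (star U *ᵥ x) = x ⬝ᵥ x := by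
    nth_rewrite 1 [hstar]
    rw [mulVec_transpose, ← dotProduct_mulVec, mulVec_mulVec, hUU, one_mulVec]
  rw [← hiso]
  simp [dotProduct, sq]

end Matrix.IsHermitian

section Eigenvalues

variable {n : ℕ} {A B : Matrix (Fin n) (Fin n) ℝ}

theorem lambdaMin_of_isEmpty [IsEmpty (Fin n)] (A : Matrix (Fin n) (Fin n) ℝ) :
    lambdaMin A = 0 := by
  unfold lambdaMin
  split_ifs <;> simp

theorem lambdaMax_of_isEmpty [IsEmpty (Fin n)] (A : Matrix (Fin n) (Fin n) ℝ) :
    lambdaMax A = 0 := by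
  unfold lambdaMax
  split_ifs <;> simp

theorem lambdaMin_nonneg (hA : A.PosSemidef) : 0 ≤ lambdaMin A := by
  rw [lambdaMin, dif_pos hA.1]
  exact Real.iInf_nonneg hA.eigenvalues_nonneg

theorem lambdaMin_mul_dotProduct_self_le (hA : A.IsHermitian) (x : Fin n → ℝ) :
    lambdaMin A * (x ⬝ᵥ x) ≤ x ⬝ᵥ (A *ᵥ x) := by
  rw [lambdaMin, dif_pos hA, hA.dotProduct_mulVec_eq_sum_eigenvalues_mul_sq,
    hA.dotProduct_self_eq_sum_sq, Finset.mul_sum]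
  exact Finset.sum_le_sum fun i _ =>
    mul_le_mul_of_nonneg_right (ciInf_le (Finite.bddBelow_range _) i) (sq_nonneg _)

theorem dotProduct_mulVec_le_lambdaMax_mul (hA : A.IsHermitian) (x : Fin n → ℝ) :
    x ⬝ᵥ (A *ᵥ x) ≤ lambdaMax A * (x ⬝ᵥ x) := by
  rw [lambdaMax, dif_pos hA, hA.dotProduct_mulVec_eq_sum_eigenvalues_mul_sq,
    hA.dotProduct_self_eq_sum_sq, Finset.mul_sum]
  exact Finset.sum_le_sum fun i _ =>
    mul_le_mul_of_nonneg_right (le_ciSup (Finite.bddAbove_range _) i) (sq_nonneg _)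

theorem exists_unit_dotProduct_mulVec_eq_lambdaMin [Nonempty (Fin n)] (hA : A.IsHermitian) :
    ∃ x : Fin n → ℝ, x ⬝ᵥ x = 1 ∧ x ⬝ᵥ (A *ᵥ x) = lambdaMin A := by
  obtain ⟨i₀, hi₀⟩ := Finite.exists_min hA.eigenvalues
  have hmin : lambdaMin A = hA.eigenvalues i₀ := by
    rw [lambdaMin, dif_pos hA]
    exact le_antisymm (ciInf_le (Finite.bddBelow_range _) i₀) (le_ciInf hi₀)
  refine ⟨hA.eigenvectorBasis i₀, ?_, ?_⟩
  · rw [hA.dotProduct_self_eq_sum_sq, hA.star_eigenvectorUnitary_mulVec i₀]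
    simp [Pi.single_apply]
  · rw [hA.dotProduct_mulVec_eq_sum_eigenvalues_mul_sq, hA.star_eigenvectorUnitary_mulVec i₀,
      hmin]
    simp [Pi.single_apply]

theorem lambdaMin_add_lambdaMin_le_lambdaMin_add (hA : A.IsHermitian) (hB : B.IsHermitian) :
    lambdaMin A + lambdaMin B ≤ lambdaMin (A + B) := by
  rcases isEmpty_or_nonempty (Fin n) with _ | _
  · simp [lambdaMin_of_isEmpty]
  obtain ⟨x, hx, hxAB⟩ := exists_unit_dotProduct_mulVec_eq_lambdaMin (hA.add hB)
  have hAx := lambdaMin_mul_dotProduct_self_le hA x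
  have hBx := lambdaMin_mul_dotProduct_self_le hB x
  rw [add_mulVec, dotProduct_add] at hxAB
  rw [hx] at hAx hBx
  linarith

theorem lambdaMin_add_le_lambdaMin_add_lambdaMax (hA : A.IsHermitian) (hB : B.IsHermitian) :
    lambdaMin (A + B) ≤ lambdaMin A + lambdaMax B := by
  rcases isEmpty_or_nonempty (Fin n) with _ | _
  · simp [lambdaMin_of_isEmpty, lambdaMax_of_isEmpty]
  obtain ⟨x, hx, hxA⟩ := exists_unit_dotProduct_mulVec_eq_lambdaMin hA
  have hABx := lambdaMin_mul_dotProduct_self_le (hA.add hB) x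
  have hBx := dotProduct_mulVec_le_lambdaMax_mul hB x
  rw [add_mulVec, dotProduct_add] at hABx
  rw [hx] at hABx hBx
  linarith

end Eigenvalues

section MarginalGain

variable {n : ℕ} {V : Type*} [DecidableEq V] {W : V → Matrix (Fin n) (Fin n) ℝ}
  {s : Finset V} {j : V}

theorem lambdaMin_le_lambdaMin_sum_insert_sub (hW : ∀ ω, (W ω).IsHermitian) (hj : j ∉ s) :
    lambdaMin (W j) ≤ lambdaMin (∑ i ∈ insert j s, W i) - lambdaMin (∑ i ∈ s, W i) := by
  have hs : (∑ i ∈ s, W i).IsHermitian := isSelfAdjoint_sum s fun i _ => hW i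
  rw [Finset.sum_insert hj]
  linarith [lambdaMin_add_lambdaMin_le_lambdaMin_add (hW j) hs]

theorem lambdaMin_sum_insert_sub_le_lambdaMax (hW : ∀ ω, (W ω).IsHermitian) (hj : j ∉ s) :
    lambdaMin (∑ i ∈ insert j s, W i) - lambdaMin (∑ i ∈ s, W i) ≤ lambdaMax (W j) := by
  have hs : (∑ i ∈ s, W i).IsHermitian := isSelfAdjoint_sum s fun i _ => hW i
  rw [Finset.sum_insert hj, add_comm]
  linarith [lambdaMin_add_le_lambdaMin_add_lambdaMax hs (hW j)]

end MarginalGain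

theorem div_mul_le_of_le {a b c : ℝ} (ha : 0 ≤ a) (hc : 0 ≤ c) (hcb : c ≤ b) : a / b * c ≤ a := by
  rw [div_mul_eq_mul_div, mul_div_assoc]
  exact mul_le_of_le_one_right ha (div_le_one_of_le₀ hcb (hc.trans hcb))

theorem lambdaMin_gramian_curvature_general
    {n : ℕ} {V : Type*} [Fintype V] [DecidableEq V]
    (W : V → Matrix (Fin n) (Fin n) ℝ) (hW : ∀ ω, (W ω).PosSemidef) :
    ∀ Ω S : Finset V, ∀ j ∈ S \ Ω,
      lambdaMin (∑ i ∈ S ∪ Ω, W i) - lambdaMin (∑ i ∈ (S.erase j) ∪ Ω, W i) ≥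
        ((⨅ ω : V, lambdaMin (W ω)) / (⨆ ω : V, lambdaMax (W ω))) *
          (lambdaMin (∑ i ∈ S, W i) - lambdaMin (∑ i ∈ S.erase j, W i)) := by
  intro Ω S j hj
  obtain ⟨hjS, hjΩ⟩ := Finset.mem_sdiff.mp hj
  have hHerm : ∀ ω, (W ω).IsHermitian := fun ω => (hW ω).1
  have hjSΩ : j ∉ S.erase j ∪ Ω := by simp [hjΩ]
  have hgain := lambdaMin_le_lambdaMin_sum_insert_sub hHerm hjSΩ
  have hgain_lower := lambdaMin_le_lambdaMin_sum_insert_sub hHerm (Finset.notMem_erase j S)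
  have hgain_upper := lambdaMin_sum_insert_sub_le_lambdaMax hHerm (Finset.notMem_erase j S)
  rw [← Finset.insert_union, Finset.insert_erase hjS] at hgain
  rw [Finset.insert_erase hjS] at hgain_lower hgain_upper
  have hmin_nonneg : 0 ≤ ⨅ ω, lambdaMin (W ω) := Real.iInf_nonneg fun ω => lambdaMin_nonneg (hW ω)
  calc _ ≤ ⨅ ω, lambdaMin (W ω) :=
        div_mul_le_of_le hmin_nonneg ((lambdaMin_nonneg (hW j)).trans hgain_lower)
          (hgain_upper.trans (le_ciSup (Finite.bddAbove_range fun ω => lambdaMax (W ω)) j))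
    _ ≤ lambdaMin (W j) := ciInf_le (Finite.bddBelow_range fun ω => lambdaMin (W ω)) j
    _ ≤ _ := hgain

/-- Upper bound `1 - γ₀` (with `γ₀ = min_ω λ_min(W_ω) / max_ω λ_max(W_ω)`) on the curvature
of the set function `S ↦ λ_min(W_S)` with `W_S = ∑_{ω ∈ S} W_ω`. -/
theorem lambdaMin_gramian_curvature
    {n : ℕ} (hn : 0 < n) {V : Type*} [Fintype V] [DecidableEq V] [Nonempty V]
    (W : V → Matrix (Fin n) (Fin n) ℝ) (hW : ∀ ω, (W ω).PosSemidef)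
    (hmax : 0 < ⨆ ω : V, lambdaMax (W ω)) :
    ∀ Ω S : Finset V, ∀ j ∈ S \ Ω,
      lambdaMin (∑ i ∈ S ∪ Ω, W i) - lambdaMin (∑ i ∈ (S.erase j) ∪ Ω, W i) ≥
        ((⨅ ω : V, lambdaMin (W ω)) / (⨆ ω : V, lambdaMax (W ω))) *
          (lambdaMin (∑ i ∈ S, W i) - lambdaMin (∑ i ∈ S.erase j, W i)) :=
  lambdaMin_gramian_curvature_general W hW
end

section
/- Let V be a nonempty finite index set, W_0 an n×n real symmetric positive definite matrix, and for each ω ∈ V let W_ω be an n×n real symmetric positive semidefinite matrix; set W̄_S := W_0 + ∑_{ω ∈ S} W_ω. Then for all Ω, S ⊆ V: ∑_{ω ∈ Ω \ S} [tr(W̄_S^{−1}) − tr(W̄_{S ∪ {ω}}^{−1})] ≥ |Ω \ S| · (min_{ω ∈ V} tr(W_ω)) / λ_1(W̄_V)². -/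
open Matrix

open scoped MatrixOrder ComplexOrder

lemma sq_le_algebraMap_sq_of_le {A : Type*} [Ring A] [StarRing A] [PartialOrder A]
    [StarOrderedRing A] [TopologicalSpace A] [Algebra ℝ A]
    [ContinuousFunctionalCalculus ℝ A IsSelfAdjoint] [NonnegSpectrumClass ℝ A]
    {a : A} {c : ℝ} (ha : 0 ≤ a) (h : a ≤ algebraMap ℝ A c) :
    a ^ 2 ≤ algebraMap ℝ A (c ^ 2) := by
  rw [le_algebraMap_iff_spectrum_le] at h
  rw [← cfc_pow_id (R := ℝ) a 2]
  refine cfc_le_algebraMap _ _ a fun x hx => ?_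
  exact pow_le_pow_left₀ (spectrum_nonneg_of_nonneg ha hx) (h x hx) 2

namespace Matrix

variable {n 𝕜 : Type*} [Fintype n] [RCLike 𝕜]

lemma trace_mono {A B : Matrix n n 𝕜} (h : A ≤ B) : A.trace ≤ B.trace := by
  simpa [trace_sub] using (le_iff.mp h).trace_nonneg

variable [DecidableEq n]

lemma trace_mul_nonneg {A B : Matrix n n 𝕜} (hA : 0 ≤ A) (hB : 0 ≤ B) :
    0 ≤ (A * B).trace := by
  obtain ⟨C, rfl⟩ := CStarAlgebra.nonneg_iff_eq_star_mul_self.mp hA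
  rw [mul_assoc, trace_mul_comm]
  exact (nonneg_iff_posSemidef.mp (star_right_conjugate_nonneg hB C)).trace_nonneg

lemma trace_mul_le_of_le_smul_one {P K : Matrix n n ℝ} (hP : 0 ≤ P) {c : ℝ}
    (hK : K ≤ c • 1) : (P * K).trace ≤ c * P.trace := by
  have := trace_mul_nonneg hP (sub_nonneg.mpr hK)
  rwa [mul_sub, trace_sub, Matrix.mul_smul, mul_one, trace_smul, smul_eq_mul,
    sub_nonneg] at this

lemma inv_sub_inv_add_eq {A B : Matrix n n 𝕜} (hA : IsUnit A) (hAB : IsUnit (A + B)) :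
    A⁻¹ - (A + B)⁻¹ =
      (A + B)⁻¹ * B * (A + B)⁻¹ + (A + B)⁻¹ * B * A⁻¹ * B * (A + B)⁻¹ := by
  have h₁ : A⁻¹ - (A + B)⁻¹ = A⁻¹ * B * (A + B)⁻¹ := by
    rw [inv_sub_inv (iff_of_true hA hAB), add_sub_cancel_left]
  have h₂ : (A + B)⁻¹ - A⁻¹ = (A + B)⁻¹ * -B * A⁻¹ := by
    rw [inv_sub_inv (iff_of_true hAB hA), sub_add_cancel_left]
  calc A⁻¹ - (A + B)⁻¹ = ((A + B)⁻¹ - ((A + B)⁻¹ - A⁻¹)) * B * (A + B)⁻¹ := by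
        rw [h₁, sub_sub_cancel]
    _ = _ := by rw [h₂]; noncomm_ring

lemma PosDef.conj_inv_le_inv_sub_inv_add {A B : Matrix n n 𝕜} (hA : A.PosDef)
    (hB : B.PosSemidef) : (A + B)⁻¹ * B * (A + B)⁻¹ ≤ A⁻¹ - (A + B)⁻¹ := by
  have hAB := hA.add_posSemidef hB
  rw [le_iff, inv_sub_inv_add_eq hA.isUnit hAB.isUnit, add_sub_cancel_left]
  simpa [mul_assoc, hB.isHermitian.eq, hAB.inv.isHermitian.eq] using
    hA.inv.posSemidef.mul_mul_conjTranspose_same ((A + B)⁻¹ * B)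

lemma trace_div_sq_le_trace_inv_sub_trace_inv_add {A B : Matrix n n ℝ} (hA : A.PosDef)
    (hB : B.PosSemidef) {c : ℝ} (hc : A + B ≤ c • 1) :
    B.trace / c ^ 2 ≤ A⁻¹.trace - (A + B)⁻¹.trace := by
  set M := A + B
  have hM : M.PosDef := hA.add_posSemidef hB
  set B' := M⁻¹ * B * M⁻¹
  have hB' : 0 ≤ B' := IsSelfAdjoint.conjugate_nonneg hB.nonneg hM.inv.isHermitian
  have hB'_le : B'.trace ≤ A⁻¹.trace - M⁻¹.trace := by
    simpa [trace_sub] using trace_mono (hA.conj_inv_le_inv_sub_inv_add hB)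
  have hM_sq : M ^ 2 ≤ c ^ 2 • 1 := by
    simp only [← Algebra.algebraMap_eq_smul_one] at hc ⊢
    exact sq_le_algebraMap_sq_of_le hM.posSemidef.nonneg hc
  have hdet : IsUnit M.det := hM.det_pos.ne'.isUnit
  have hB_eq : B = M * B' * M := by
    simp only [B', ← mul_assoc, mul_nonsing_inv _ hdet, one_mul]
    rw [mul_assoc, nonsing_inv_mul _ hdet, mul_one]
  refine div_le_of_le_mul₀ (sq_nonneg c)
    ((nonneg_iff_posSemidef.mp hB').trace_nonneg.trans hB'_le) ?_
  calc B.trace = (B' * M ^ 2).trace := by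
        rw [hB_eq, trace_mul_comm, ← mul_assoc, trace_mul_comm, sq]
    _ ≤ c ^ 2 * B'.trace := trace_mul_le_of_le_smul_one hB' hM_sq
    _ ≤ (A⁻¹.trace - M⁻¹.trace) * c ^ 2 := by rw [mul_comm]; gcongr

end Matrix

lemma le_lambdaMax_smul_one {n : ℕ} {M : Matrix (Fin n) (Fin n) ℝ} (hM : M.IsHermitian) :
    M ≤ lambdaMax M • 1 := by
  rw [lambdaMax, dif_pos hM, ← Algebra.algebraMap_eq_smul_one]
  refine le_algebraMap_of_spectrum_le (fun x hx => ?_) hM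
  obtain ⟨i, rfl⟩ := hM.spectrum_real_eq_range_eigenvalues ▸ hx
  exact le_ciSup (Set.finite_range _).bddAbove i

theorem trace_inv_gramian_marginal_sum_lower_bound_general
    {n : ℕ} {V : Type*} [Fintype V] [DecidableEq V]
    (W₀ : Matrix (Fin n) (Fin n) ℝ) (hW₀ : W₀.PosDef)
    (W : V → Matrix (Fin n) (Fin n) ℝ) (hW : ∀ ω, (W ω).PosSemidef) :
    ∀ Ω S : Finset V,
      ∑ ω ∈ Ω \ S,
          (((W₀ + ∑ i ∈ S, W i)⁻¹).trace - ((W₀ + ∑ i ∈ insert ω S, W i)⁻¹).trace) ≥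
        ((Ω \ S).card : ℝ) *
          ((⨅ ω : V, (W ω).trace) /
            (lambdaMax (W₀ + ∑ i ∈ (Finset.univ : Finset V), W i)) ^ 2) := by
  intro Ω S
  have hW_sum (T : Finset V) : (∑ i ∈ T, W i).PosSemidef := posSemidef_sum T fun i _ => hW i
  have hV := le_lambdaMax_smul_one (hW₀.add_posSemidef (hW_sum Finset.univ)).isHermitian
  have hmarginal : ∀ ω ∈ Ω \ S,
      (⨅ ω : V, (W ω).trace) / (lambdaMax (W₀ + ∑ i, W i)) ^ 2 ≤
        ((W₀ + ∑ i ∈ S, W i)⁻¹).trace -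
          ((W₀ + ∑ i ∈ insert ω S, W i)⁻¹).trace := by
    intro ω hω
    have hωS := (Finset.mem_sdiff.mp hω).2
    have hsplit : W₀ + ∑ i ∈ insert ω S, W i = W₀ + ∑ i ∈ S, W i + W ω := by
      rw [Finset.sum_insert hωS]; abel
    have hle : W₀ + ∑ i ∈ S, W i + W ω ≤ lambdaMax (W₀ + ∑ i, W i) • 1 := by
      refine le_trans ?_ hV
      rw [← hsplit]
      gcongr
      · exact fun i _ _ => (hW i).nonneg
      · exact Finset.subset_univ _
    rw [hsplit]
    refine le_trans ?_ (trace_div_sq_le_trace_inv_sub_trace_inv_add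
      (hW₀.add_posSemidef (hW_sum S)) (hW ω) hle)
    gcongr
    exact ciInf_le (Set.finite_range _).bddBelow ω
  simpa using Finset.card_nsmul_le_sum (Ω \ S) _ _ hmarginal

/-- The sum of marginal decreases of `tr(W̄_S⁻¹)` over `ω ∈ Ω \ S` is at least
`|Ω \ S| · (min_ω tr(W_ω)) / λ_max(W̄_V)²`, where `W̄_S = W₀ + ∑_{ω ∈ S} W_ω`. -/
theorem trace_inv_gramian_marginal_sum_lower_bound
    {n : ℕ} {V : Type*} [Fintype V] [DecidableEq V] [Nonempty V]
    (W₀ : Matrix (Fin n) (Fin n) ℝ) (hW₀ : W₀.PosDef)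
    (W : V → Matrix (Fin n) (Fin n) ℝ) (hW : ∀ ω, (W ω).PosSemidef) :
    ∀ Ω S : Finset V,
      ∑ ω ∈ Ω \ S,
          (((W₀ + ∑ i ∈ S, W i)⁻¹).trace - ((W₀ + ∑ i ∈ insert ω S, W i)⁻¹).trace) ≥
        ((Ω \ S).card : ℝ) *
          ((⨅ ω : V, (W ω).trace) /
            (lambdaMax (W₀ + ∑ i ∈ (Finset.univ : Finset V), W i)) ^ 2) :=
  trace_inv_gramian_marginal_sum_lower_bound_general W₀ hW₀ W hW
end
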